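/- arXiv:0711.0587 — 4 statements merged into one kernel-verified Lean document; each statement's English description precedes it below -/
import Mathlib

section
/- Suppose Z takes exactly the p distinct complex values a_1,…,a_p, each with positive probability (P(Z = a_i) > 0 for every i and Σ_i P(Z = a_i) = 1). Let v* ∈ ℂ^{p+1} be the coefficient vector of the polynomial ∏_{i=1}^{p}(x − a_i), i.e. Σ_{j=0}^{p} v*_j x^j = ∏_{i=1}^{p}(x − a_i). Then the kernel of the conjugate-moment matrix D(Z,p) (acting on ℂ^{p+1} by (Dv)_j = Σ_k D_{jk} v_k) is exactly the one-dimensional span of v*; consequently D(Z,p) has rank p, and for any nonzero w in the kernel of D(Z,p), the points a_1,…,a_p are precisely the roots of the polynomial Σ_{j=0}^{p} w_j x^j. -/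
open MeasureTheory

lemma integral_comp_of_fin_range {Ω : Type*} [MeasurableSpace Ω] (μ : Measure Ω)
    [IsProbabilityMeasure μ] {p : ℕ} (Z : Ω → ℂ) (hZ : Measurable Z)
    (a : Fin p → ℂ) (ha : Function.Injective a)
    (hsum : ∑ i, μ {ω | Z ω = a i} = 1) (f : ℂ → ℂ) :
    ∫ ω, f (Z ω) ∂μ = ∑ i, (μ {ω | Z ω = a i}).toReal • f (a i) := by
  set S : Fin p → Set Ω := fun i => {ω | Z ω = a i} with hSdef
  have hmeas : ∀ i, MeasurableSet (S i) := fun i => hZ (measurableSet_singleton (a i))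
  have hdisj : Pairwise (Function.onFun Disjoint S) := by
    intro i j hij
    simp only [Function.onFun, Set.disjoint_left]
    intro ω hi hj
    exact hij (ha (hi.symm.trans hj))
  have hU : μ (⋃ i, S i) = 1 := by
    rw [measure_iUnion hdisj hmeas, tsum_fintype]; exact hsum
  have hcompl : μ (⋃ i, S i)ᶜ = 0 := by
    rw [measure_compl (MeasurableSet.iUnion hmeas) (measure_ne_top μ _), hU, measure_univ]
    simp
  have hae : (fun ω => f (Z ω)) =ᵐ[μ]
      (fun ω => ∑ i, (S i).indicator (fun _ => f (a i)) ω) := by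
    filter_upwards [mem_ae_iff.mpr hcompl] with ω hω
    obtain ⟨i₀, hi₀⟩ := Set.mem_iUnion.mp hω
    rw [Finset.sum_eq_single i₀]
    · rw [Set.indicator_of_mem hi₀, show Z ω = a i₀ from hi₀]
    · intro j _ hj
      exact Set.indicator_of_notMem (fun hωj => hj (ha (hωj.symm.trans hi₀))) _
    · intro h; exact absurd (Finset.mem_univ i₀) h
  rw [integral_congr_ae hae, integral_finset_sum]
  · exact Finset.sum_congr rfl fun i _ => integral_indicator_const _ (hmeas i)
  · exact fun i _ => (integrable_const _).indicator (hmeas i)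

/-- The conjugate-moment matrix of a complex random variable `Z`:
`D j k = E[Z^k ⬝ conj(Z)^j]` for `j, k ∈ {0, …, p}`. -/
noncomputable def conjMomentMatrix {Ω : Type*} [MeasurableSpace Ω] (μ : Measure Ω)
    (Z : Ω → ℂ) (p : ℕ) : Matrix (Fin (p + 1)) (Fin (p + 1)) ℂ :=
  fun j k => ∫ ω, (Z ω) ^ (k : ℕ) * (starRingEnd ℂ) (Z ω) ^ (j : ℕ) ∂μ

/-- if `Z` takes exactly the `p` distinct values `a 1, …, a p`, each with
positive probability, then the kernel of `D(Z,p)` is the span of the coefficient vector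
`v*` of `∏ (x - a i)`, `D(Z,p)` has rank `p`, and the roots of the polynomial attached
to any nonzero kernel vector are exactly the `a i`. -/
theorem conjMomentMatrix_kernel_eq_span
    {Ω : Type*} [MeasurableSpace Ω] (μ : Measure Ω) [IsProbabilityMeasure μ]
    (p : ℕ) (hp : 1 ≤ p) (Z : Ω → ℂ) (hZmeas : Measurable Z)
    (hZint : Integrable (fun ω => ‖Z ω‖ ^ (2 * p)) μ)
    (a : Fin p → ℂ) (ha : Function.Injective a)
    (hpos : ∀ i, 0 < μ {ω | Z ω = a i})
    (hsum : ∑ i, μ {ω | Z ω = a i} = 1)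
    (vstar : Fin (p + 1) → ℂ)
    (hvstar : ∀ j : Fin (p + 1),
      vstar j = (∏ i, (Polynomial.X - Polynomial.C (a i))).coeff (j : ℕ)) :
    ({v : Fin (p + 1) → ℂ | (conjMomentMatrix μ Z p).mulVec v = 0}
        = (Submodule.span ℂ {vstar} : Submodule ℂ (Fin (p + 1) → ℂ))) ∧
    (conjMomentMatrix μ Z p).rank = p ∧
    (∀ w : Fin (p + 1) → ℂ, w ≠ 0 → (conjMomentMatrix μ Z p).mulVec w = 0 →
      ∀ x : ℂ, (∑ j, w j * x ^ (j : ℕ)) = 0 ↔ ∃ i, x = a i) := by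
  classical
  set D := conjMomentMatrix μ Z p with hDdef
  set c : Fin p → ℝ := fun i => (μ {ω | Z ω = a i}).toReal with hcdef
  have hc : ∀ i, 0 < c i := fun i =>
    ENNReal.toReal_pos (hpos i).ne' (measure_ne_top μ _)
  -- entries of D
  have hD : ∀ j k : Fin (p + 1),
      D j k = ∑ i, (c i : ℂ) * ((a i) ^ (k : ℕ) * (starRingEnd ℂ) (a i) ^ (j : ℕ)) := by
    intro j k
    have := integral_comp_of_fin_range μ Z hZmeas a ha hsum
      (fun z => z ^ (k : ℕ) * (starRingEnd ℂ) z ^ (j : ℕ))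
    simp only [hDdef, conjMomentMatrix]
    rw [this]
    exact Finset.sum_congr rfl fun i _ => by rw [Complex.real_smul]
  -- mulVec formula
  have hDv : ∀ (v : Fin (p + 1) → ℂ) (j : Fin (p + 1)),
      D.mulVec v j = ∑ i, (c i : ℂ) * (starRingEnd ℂ) (a i) ^ (j : ℕ) *
        (∑ k, v k * (a i) ^ (k : ℕ)) := by
    intro v j
    simp only [Matrix.mulVec, dotProduct, hD, Finset.sum_mul]
    rw [Finset.sum_comm]
    refine Finset.sum_congr rfl fun i _ => ?_
    rw [Finset.mul_sum]
    exact Finset.sum_congr rfl fun k _ => by ring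
  -- kernel characterization via evaluations
  have hker : ∀ v : Fin (p + 1) → ℂ,
      D.mulVec v = 0 ↔ ∀ i, ∑ k, v k * (a i) ^ (k : ℕ) = 0 := by
    intro v
    set P : Fin p → ℂ := fun i => ∑ k, v k * (a i) ^ (k : ℕ) with hPdef
    constructor
    · intro h
      have hT : ∑ j, (starRingEnd ℂ) (v j) * D.mulVec v j = 0 := by
        simp [h]
      have key1 : ∀ i : Fin p,
          ∑ j : Fin (p + 1), (starRingEnd ℂ) (v j) *
            ((c i : ℂ) * (starRingEnd ℂ) (a i) ^ (j : ℕ) * P i)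
          = (c i : ℂ) * (Complex.normSq (P i) : ℝ) := by
        intro i
        have hconj : (starRingEnd ℂ) (P i)
            = ∑ j : Fin (p + 1), (starRingEnd ℂ) (v j) * (starRingEnd ℂ) (a i) ^ (j : ℕ) := by
          simp [hPdef, map_sum, map_mul, map_pow]
        calc ∑ j : Fin (p + 1), (starRingEnd ℂ) (v j) *
              ((c i : ℂ) * (starRingEnd ℂ) (a i) ^ (j : ℕ) * P i)
            = (∑ j : Fin (p + 1), (starRingEnd ℂ) (v j) * (starRingEnd ℂ) (a i) ^ (j : ℕ)) *
              ((c i : ℂ) * P i) := by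
              rw [Finset.sum_mul]
              exact Finset.sum_congr rfl fun j _ => by ring
          _ = (c i : ℂ) * (P i * (starRingEnd ℂ) (P i)) := by rw [← hconj]; ring
          _ = (c i : ℂ) * (Complex.normSq (P i) : ℝ) := by rw [Complex.mul_conj]
      have key : ∑ j, (starRingEnd ℂ) (v j) * D.mulVec v j
          = ∑ i, ((c i : ℂ) * (Complex.normSq (P i) : ℝ)) := by
        have hstep : ∀ j : Fin (p + 1), (starRingEnd ℂ) (v j) * D.mulVec v j
            = ∑ i, (starRingEnd ℂ) (v j) *
                ((c i : ℂ) * (starRingEnd ℂ) (a i) ^ (j : ℕ) * P i) := by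
          intro j
          rw [hDv, Finset.mul_sum]
        rw [Finset.sum_congr rfl fun j _ => hstep j, Finset.sum_comm]
        exact Finset.sum_congr rfl fun i _ => key1 i
      have hreal : ∑ i, c i * Complex.normSq (P i) = 0 := by
        have : ((∑ i, c i * Complex.normSq (P i) : ℝ) : ℂ) = 0 := by
          push_cast
          rw [← key, hT]
        exact_mod_cast this
      have hzero : ∀ i ∈ Finset.univ, c i * Complex.normSq (P i) = 0 :=
        (Finset.sum_eq_zero_iff_of_nonneg fun i _ =>
          mul_nonneg (hc i).le (Complex.normSq_nonneg _)).mp hreal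
      intro i
      have := hzero i (Finset.mem_univ i)
      have h2 : Complex.normSq (P i) = 0 := by
        rcases mul_eq_zero.mp this with h | h
        · exact absurd h (hc i).ne'
        · exact h
      exact Complex.normSq_eq_zero.mp h2
    · intro h
      funext j
      rw [hDv]
      simp [h]
  -- the polynomial q
  set q : Polynomial ℂ := ∏ i, (Polynomial.X - Polynomial.C (a i)) with hqdef
  have hq_monic : q.Monic :=
    Polynomial.monic_prod_of_monic _ _ fun i _ => Polynomial.monic_X_sub_C (a i)
  have hq_deg : q.natDegree = p := by
    rw [hqdef, Polynomial.natDegree_prod _ _ fun i _ => Polynomial.X_sub_C_ne_zero (a i)]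
    simp
  have hq_ne : q ≠ 0 := hq_monic.ne_zero
  have hq_eval : ∀ x : ℂ, q.eval x = ∏ i, (x - a i) := by
    intro x; simp [hqdef, Polynomial.eval_prod]
  have hq_root : ∀ i, q.eval (a i) = 0 := by
    intro i
    rw [hq_eval]
    exact Finset.prod_eq_zero (Finset.mem_univ i) (by ring)
  have hsum_eval : ∀ x : ℂ, ∑ j : Fin (p + 1), vstar j * x ^ (j : ℕ) = q.eval x := by
    intro x
    rw [Polynomial.eval_eq_sum_range' (n := p + 1) (by omega) x]
    rw [← Fin.sum_univ_eq_sum_range (fun n => q.coeff n * x ^ n)]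
    exact Finset.sum_congr rfl fun j _ => by rw [hvstar j]
  have hvstar_ne : vstar ≠ 0 := by
    intro h0
    have h1 : vstar ⟨p, Nat.lt_succ_self p⟩ = 1 := by
      rw [hvstar]
      have := hq_monic.coeff_natDegree
      rwa [hq_deg] at this
    rw [h0] at h1
    simp at h1
  -- membership iff
  have hmem : ∀ v : Fin (p + 1) → ℂ,
      D.mulVec v = 0 ↔ v ∈ Submodule.span ℂ {vstar} := by
    intro v
    rw [hker]
    constructor
    · intro h
      set Pv : Polynomial ℂ := ∑ j : Fin (p + 1), Polynomial.C (v j) * Polynomial.X ^ (j : ℕ)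
        with hPvdef
      have hcoeff : ∀ j : Fin (p + 1), Pv.coeff (j : ℕ) = v j := by
        intro j
        rw [hPvdef, Polynomial.finset_sum_coeff]
        rw [Finset.sum_eq_single j]
        · simp
        · intro b _ hb
          simp only [Polynomial.coeff_C_mul, Polynomial.coeff_X_pow]
          rw [if_neg (fun hh => hb (Fin.ext hh.symm))]
          ring
        · intro h; exact absurd (Finset.mem_univ j) h
      have heval : ∀ x : ℂ, Pv.eval x = ∑ k, v k * x ^ (k : ℕ) := by
        intro x; simp [hPvdef, Polynomial.eval_finset_sum]
      have hdvd : q ∣ Pv := by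
        rw [hqdef]
        refine Finset.prod_dvd_of_coprime ?_ fun i _ => ?_
        · exact (Polynomial.pairwise_coprime_X_sub_C ha).set_pairwise _
        · rw [Polynomial.dvd_iff_isRoot]
          unfold Polynomial.IsRoot
          rw [heval]
          exact h i
      obtain ⟨r, hr⟩ := hdvd
      have hPv_deg : Pv.natDegree ≤ p := by
        refine Polynomial.natDegree_sum_le_of_forall_le _ _ fun j _ => ?_
        calc (Polynomial.C (v j) * Polynomial.X ^ (j : ℕ)).natDegree
            ≤ (Polynomial.X ^ (j : ℕ) : Polynomial ℂ).natDegree :=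
              Polynomial.natDegree_C_mul_le _ _
          _ = (j : ℕ) := Polynomial.natDegree_X_pow _
          _ ≤ p := Fin.is_le j
      by_cases hr0 : r = 0
      · have hPv0 : Pv = 0 := by rw [hr, hr0, mul_zero]
        have : v = 0 := by
          funext j
          rw [← hcoeff j, hPv0]
          simp
        rw [this]
        exact Submodule.zero_mem _
      · have hdeg : Pv.natDegree = p + r.natDegree := by
          rw [hr, Polynomial.natDegree_mul hq_ne hr0, hq_deg]
        have hrdeg : r.natDegree = 0 := by omega
        obtain ⟨cc, hcc⟩ := Polynomial.natDegree_eq_zero.mp hrdeg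
        refine Submodule.mem_span_singleton.mpr ⟨cc, ?_⟩
        funext j
        have : Pv.coeff (j : ℕ) = cc * q.coeff (j : ℕ) := by
          rw [hr, ← hcc, Polynomial.coeff_mul_C, mul_comm]
        rw [Pi.smul_apply, smul_eq_mul, hvstar j, ← this, hcoeff j]
    · intro hv i
      obtain ⟨cc, hcc⟩ := Submodule.mem_span_singleton.mp hv
      rw [← hcc]
      have : ∑ k : Fin (p + 1), (cc • vstar) k * (a i) ^ (k : ℕ)
          = cc * ∑ k : Fin (p + 1), vstar k * (a i) ^ (k : ℕ) := by
        rw [Finset.mul_sum]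
        exact Finset.sum_congr rfl fun k _ => by
          rw [Pi.smul_apply, smul_eq_mul]; ring
      rw [this, hsum_eval, hq_root i, mul_zero]
  have hset : {v : Fin (p + 1) → ℂ | D.mulVec v = 0}
      = (Submodule.span ℂ {vstar} : Submodule ℂ (Fin (p + 1) → ℂ)) := by
    ext v
    exact hmem v
  refine ⟨hset, ?_, ?_⟩
  · -- rank
    have hkerSub : LinearMap.ker D.mulVecLin = Submodule.span ℂ {vstar} := by
      ext v
      rw [LinearMap.mem_ker, Matrix.mulVecLin_apply]
      exact hmem v
    have hrn := LinearMap.finrank_range_add_finrank_ker D.mulVecLin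
    rw [hkerSub, finrank_span_singleton hvstar_ne] at hrn
    have hfin : Module.finrank ℂ (Fin (p + 1) → ℂ) = p + 1 := by
      simp
    rw [hfin] at hrn
    show Module.finrank ℂ (LinearMap.range D.mulVecLin) = p
    omega
  · intro w hw0 hDw x
    obtain ⟨cc, hcc⟩ := Submodule.mem_span_singleton.mp ((hmem w).mp hDw)
    have hcc0 : cc ≠ 0 := by
      intro h; apply hw0; rw [← hcc, h, zero_smul]
    have hwx : ∑ j, w j * x ^ (j : ℕ) = cc * q.eval x := by
      rw [← hsum_eval, Finset.mul_sum, ← hcc]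
      exact Finset.sum_congr rfl fun k _ => by
        rw [Pi.smul_apply, smul_eq_mul]; ring
    rw [hwx, hq_eval, mul_eq_zero]
    simp only [hcc0, false_or]
    rw [Finset.prod_eq_zero_iff]
    constructor
    · rintro ⟨i, _, hi⟩; exact ⟨i, sub_eq_zero.mp hi⟩
    · rintro ⟨i, hi⟩; exact ⟨i, Finset.mem_univ i, by rw [hi]; ring⟩
end

section
/- Fix an integer p ≥ 1 and β ∈ ℝ. Let A(β) and B(β) be the (p+1)² × (p+1)² real matrices with rows and columns indexed by pairs (j,k) ∈ {0,…,p}², defined by: A(β) has entry C(k,l)·C(j,m)·(j−m)!·β^{(k−l)+(j−m)} at position ((j,k),(m,l)) whenever 0 ≤ m ≤ j, 0 ≤ l ≤ k and k−l = j−m, and entry 0 otherwise; B(β) has entry (−1)^{j−m}·C(k,j−m)·C(j,m)·(j−m)!·β^{2(j−m)} at position ((j,k),(m,l)) whenever 0 ≤ m ≤ j and l = k−j+m ≥ 0, and entry 0 otherwise. Then A(β)·B(β) = B(β)·A(β) = Id, i.e. B(β) is the inverse matrix of A(β). -/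
/-- The matrix `A(β)`: rows and columns indexed by pairs `(j,k) ∈ {0,…,p}²`, with entry
`C(k,l)⬝C(j,m)⬝(j−m)!⬝β^{(k−l)+(j−m)}` at `((j,k),(m,l))` whenever `m ≤ j`, `l ≤ k` and
`k − l = j − m`, and `0` otherwise. -/
noncomputable def matA (p : ℕ) (β : ℝ) :
    Matrix (Fin (p + 1) × Fin (p + 1)) (Fin (p + 1) × Fin (p + 1)) ℝ :=
  fun jk ml =>
    if (ml.1 : ℕ) ≤ (jk.1 : ℕ) ∧ (ml.2 : ℕ) ≤ (jk.2 : ℕ)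
        ∧ (jk.2 : ℕ) - (ml.2 : ℕ) = (jk.1 : ℕ) - (ml.1 : ℕ) then
      ((jk.2 : ℕ).choose (ml.2 : ℕ) * (jk.1 : ℕ).choose (ml.1 : ℕ)
          * ((jk.1 : ℕ) - (ml.1 : ℕ)).factorial : ℝ)
        * β ^ (((jk.2 : ℕ) - (ml.2 : ℕ)) + ((jk.1 : ℕ) - (ml.1 : ℕ)))
    else 0

/-- The matrix `B(β)`: entry `(−1)^{j−m}⬝C(k,j−m)⬝C(j,m)⬝(j−m)!⬝β^{2(j−m)}` at
`((j,k),(m,l))` whenever `m ≤ j` and `l = k − j + m ≥ 0`, and `0` otherwise. -/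
noncomputable def matB (p : ℕ) (β : ℝ) :
    Matrix (Fin (p + 1) × Fin (p + 1)) (Fin (p + 1) × Fin (p + 1)) ℝ :=
  fun jk ml =>
    if (ml.1 : ℕ) ≤ (jk.1 : ℕ) ∧ (ml.2 : ℤ) = (jk.2 : ℤ) - (jk.1 : ℤ) + (ml.1 : ℤ) then
      (-1 : ℝ) ^ ((jk.1 : ℕ) - (ml.1 : ℕ))
        * ((jk.2 : ℕ).choose ((jk.1 : ℕ) - (ml.1 : ℕ)) * (jk.1 : ℕ).choose (ml.1 : ℕ)
            * ((jk.1 : ℕ) - (ml.1 : ℕ)).factorial : ℝ)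
        * β ^ (2 * ((jk.1 : ℕ) - (ml.1 : ℕ)))
    else 0


/-!
On the monomial basis `x^j y^k`, both matrices are exponentials of the nilpotent operator
`∂x∂y`: since `(∂x∂y)^d / d! (x^j y^k) = C(j,d) C(k,d) d! x^(j-d) y^(k-d)`, we have
`A(β) = exp(β² ∂x∂y)` and `B(β) = exp(-β² ∂x∂y)`. The matrices `exp(t ∂x∂y)` form a one-parameter
group, `exp(s ∂x∂y) exp(t ∂x∂y) = exp((s+t) ∂x∂y)`; entrywise this is the binomial theorem for
`(s+t)^d` after the identity `C(j,i) C(j-i,d-i) = C(j,d) C(d,i)` (and its analogue in `k`).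
-/

open Finset Nat

def mixedDerivCoeff (j k d : ℕ) : ℕ := j.choose d * k.choose d * d !

theorem mixedDerivCoeff_mul_mixedDerivCoeff {j k d i : ℕ} (hid : i ≤ d) :
    mixedDerivCoeff j k i * mixedDerivCoeff (j - i) (k - i) (d - i)
      = mixedDerivCoeff j k d * d.choose i := by
  unfold mixedDerivCoeff
  calc j.choose i * k.choose i * i !
        * ((j - i).choose (d - i) * (k - i).choose (d - i) * (d - i)!)
      = (j.choose i * (j - i).choose (d - i)) * (k.choose i * (k - i).choose (d - i))
          * (i ! * (d - i)!) := by ring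
    _ = (j.choose d * d.choose i) * (k.choose d * d.choose i) * (i ! * (d - i)!) := by
          rw [Nat.choose_mul hid, Nat.choose_mul hid]
    _ = j.choose d * k.choose d * (d.choose i * i ! * (d - i)!) * d.choose i := by ring
    _ = j.choose d * k.choose d * d ! * d.choose i := by
          rw [Nat.choose_mul_factorial_mul_factorial hid]

variable {R : Type*} [CommSemiring R]

/-- The entry of `exp(t ∂x∂y)` at row `x^j y^k` and column `x^m y^l`. -/
def expMixedDeriv (t : R) (j k m l : ℕ) : R :=
  if m ≤ j ∧ l + j = k + m then mixedDerivCoeff j k (j - m) * t ^ (j - m) else 0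

theorem expMixedDeriv_mul_ne_zero {s t : R} {j k a b m l : ℕ}
    (h : expMixedDeriv s j k a b * expMixedDeriv t a b m l ≠ 0) :
    m ≤ a ∧ a ≤ j ∧ b + j = k + a ∧ l + a = b + m := by
  unfold expMixedDeriv at h
  split_ifs at h with h₁ h₂ <;> first | omega | simp at h

theorem expMixedDeriv_mul_expMixedDeriv_sub (s t : R) {j k m l i : ℕ} (hmj : m ≤ j)
    (hlk : l + j = k + m) (hi : i ≤ j - m) :
    expMixedDeriv s j k (j - i) (k - i) * expMixedDeriv t (j - i) (k - i) m l
      = mixedDerivCoeff j k (j - m) * (s ^ i * t ^ (j - m - i) * (j - m).choose i) := by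
  unfold expMixedDeriv
  rw [if_pos (by omega), if_pos (by omega), show j - (j - i) = i by omega,
    show j - i - m = j - m - i by omega]
  calc (mixedDerivCoeff j k i : R) * s ^ i
        * (mixedDerivCoeff (j - i) (k - i) (j - m - i) * t ^ (j - m - i))
      = ((mixedDerivCoeff j k i * mixedDerivCoeff (j - i) (k - i) (j - m - i) : ℕ) : R)
          * (s ^ i * t ^ (j - m - i)) := by push_cast; ring
    _ = _ := by rw [mixedDerivCoeff_mul_mixedDerivCoeff hi]; push_cast; ring

theorem sum_expMixedDeriv_mul (s t : R) {N j k : ℕ} (hj : j < N) (hk : k < N) (m l : ℕ) :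
    ∑ x ∈ range N ×ˢ range N, expMixedDeriv s j k x.1 x.2 * expMixedDeriv t x.1 x.2 m l
      = expMixedDeriv (s + t) j k m l := by
  by_cases hjk : m ≤ j ∧ l + j = k + m
  swap
  · rw [expMixedDeriv, if_neg hjk]
    refine sum_eq_zero fun x _ => ?_
    by_contra hx
    have := expMixedDeriv_mul_ne_zero hx
    omega
  obtain ⟨hmj, hlk⟩ := hjk
  have hsupport : ∑ x ∈ (range (j - m + 1)).image (fun i => (j - i, k - i)),
        expMixedDeriv s j k x.1 x.2 * expMixedDeriv t x.1 x.2 m l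
      = ∑ x ∈ range N ×ˢ range N,
        expMixedDeriv s j k x.1 x.2 * expMixedDeriv t x.1 x.2 m l := by
    apply sum_subset
    · intro x hx
      simp only [mem_image, mem_range, mem_product] at hx ⊢
      obtain ⟨i, -, rfl⟩ := hx
      omega
    · intro x _ hx
      by_contra hne
      have := expMixedDeriv_mul_ne_zero hne
      exact hx (mem_image.2 ⟨j - x.1, mem_range.2 (by omega), Prod.ext (by omega) (by omega)⟩)
  rw [← hsupport, sum_image fun i hi i' hi' h => by
    simp only [coe_range, Set.mem_Iio, Prod.mk.injEq] at hi hi' h; omega]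
  rw [sum_congr rfl fun i hi => expMixedDeriv_mul_expMixedDeriv_sub s t hmj hlk
    (Nat.lt_succ_iff.1 (mem_range.1 hi)), ← mul_sum, ← add_pow, expMixedDeriv,
    if_pos ⟨hmj, hlk⟩]

def expMixedDerivMatrix (n : ℕ) (t : R) : Matrix (Fin n × Fin n) (Fin n × Fin n) R :=
  fun jk ml => expMixedDeriv t jk.1 jk.2 ml.1 ml.2

theorem expMixedDerivMatrix_mul (n : ℕ) (s t : R) :
    expMixedDerivMatrix n s * expMixedDerivMatrix n t = expMixedDerivMatrix n (s + t) := by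
  ext ⟨j, k⟩ ⟨m, l⟩
  rw [Matrix.mul_apply, Fintype.sum_prod_type]
  simp only [expMixedDerivMatrix]
  rw [← sum_expMixedDeriv_mul s t j.isLt k.isLt m l, sum_product,
    Fin.sum_univ_eq_sum_range (fun a => ∑ b : Fin n,
      expMixedDeriv s (j : ℕ) k a b * expMixedDeriv t a b m l)]
  exact sum_congr rfl fun a _ => Fin.sum_univ_eq_sum_range
    (fun b => expMixedDeriv s (j : ℕ) k a b * expMixedDeriv t a b m l) n

theorem expMixedDerivMatrix_zero (n : ℕ) : expMixedDerivMatrix n (0 : R) = 1 := by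
  ext ⟨j, k⟩ ⟨m, l⟩
  simp only [expMixedDerivMatrix, expMixedDeriv, Matrix.one_apply, Prod.mk.injEq, Fin.ext_iff]
  by_cases h : (j : ℕ) = m ∧ (k : ℕ) = l
  · simp [h, mixedDerivCoeff]
  · rw [if_neg h]
    split_ifs
    · rw [zero_pow (by omega), mul_zero]
    · rfl

theorem matA_eq_expMixedDerivMatrix (p : ℕ) (β : ℝ) :
    matA p β = expMixedDerivMatrix (p + 1) (β ^ 2) := by
  ext ⟨j, k⟩ ⟨m, l⟩
  simp only [matA, expMixedDerivMatrix, expMixedDeriv]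
  split_ifs with h₁ h₂ h₂
  · rw [mixedDerivCoeff, Nat.choose_symm_of_eq_add (show (k : ℕ) = l + (j - m) by omega),
      Nat.choose_symm_of_eq_add (show (j : ℕ) = m + (j - m) by omega), h₁.2.2, ← pow_mul,
      two_mul]
    push_cast
    ring
  · omega
  · omega
  · rfl

theorem matB_eq_expMixedDerivMatrix (p : ℕ) (β : ℝ) :
    matB p β = expMixedDerivMatrix (p + 1) (-β ^ 2) := by
  ext ⟨j, k⟩ ⟨m, l⟩
  simp only [matB, expMixedDerivMatrix, expMixedDeriv]
  split_ifs with h₁ h₂ h₂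
  · rw [mixedDerivCoeff, Nat.choose_symm_of_eq_add (show (j : ℕ) = m + (j - m) by omega),
      neg_pow (β ^ 2), ← pow_mul]
    push_cast
    ring
  · omega
  · omega
  · rfl

theorem matB_is_inverse_of_matA_general (p : ℕ) (β : ℝ) :
    matA p β * matB p β = 1 ∧ matB p β * matA p β = 1 := by
  rw [matA_eq_expMixedDerivMatrix, matB_eq_expMixedDerivMatrix, expMixedDerivMatrix_mul,
    expMixedDerivMatrix_mul, add_neg_cancel, neg_add_cancel, expMixedDerivMatrix_zero]
  exact ⟨rfl, rfl⟩

/-- `B(β)` is the two-sided inverse of `A(β)`. -/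
theorem matB_is_inverse_of_matA (p : ℕ) (hp : 1 ≤ p) (β : ℝ) :
    matA p β * matB p β = 1 ∧ matB p β * matA p β = 1 :=
  matB_is_inverse_of_matA_general p β
end

section
/- Let p ≥ 1, c > 0, and z_1,…,z_N ∈ ℂ. Set d_{j,k} = N^{-1} Σ_{t=1}^{N} z_t^k · conj(z_t)^j for 0 ≤ j,k ≤ p, and for σ ∈ ℝ let D̃(σ) be the (p+1)×(p+1) matrix with (j,k)-entry Σ_{m=0}^{min(j,k)} (−1)^m · C(k,m) · C(j,m) · m! · (cσ)^{2m} · d_{j−m,k−m}. Then for every v ∈ ℂ^{p+1}, the function Q_v(σ) = Σ_{j,k} D̃(σ)_{jk} v_k · conj(v_j) is a polynomial in σ with real coefficients of degree at most 2p; its coefficient of σ^{2p} equals (−1)^p · p! · c^{2p} · |v_p|²; and Q_v(0) = N^{-1} Σ_{t=1}^{N} |Σ_{k=0}^{p} v_k z_t^k|² ≥ 0. -/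
open Finset

/-- Empirical conjugate moments of a finite sample `z : Fin N → ℂ`:
`d j k = N⁻¹ Σ_t z_t^k ⬝ conj(z_t)^j`. -/
noncomputable def empConjMoment {N : ℕ} (z : Fin N → ℂ) (j k : ℕ) : ℂ :=
  (N : ℂ)⁻¹ * ∑ t, (z t) ^ k * (starRingEnd ℂ) (z t) ^ j

/-- The pseudo-moment matrix `D̃(σ)` built from the empirical conjugate moments:
`(j,k)`-entry `Σ_{m=0}^{min(j,k)} (−1)^m C(k,m) C(j,m) m! (cσ)^{2m} d_{j−m,k−m}`. -/
noncomputable def pseudoMomentMatrix (p : ℕ) {N : ℕ} (z : Fin N → ℂ) (c σ : ℝ) :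
    Matrix (Fin (p + 1)) (Fin (p + 1)) ℂ :=
  fun j k => ∑ m ∈ Finset.range (min (j : ℕ) (k : ℕ) + 1),
    ((-1 : ℂ) ^ m * ((k : ℕ).choose m : ℂ) * ((j : ℕ).choose m : ℂ) * (m.factorial : ℂ)
        * ((c * σ : ℝ) : ℂ) ^ (2 * m))
      * empConjMoment z ((j : ℕ) - m) ((k : ℕ) - m)

/-!
Write `P = Σ_k v_k X^k` and `P^[m] = Σ_k C(k,m) v_k X^(k-m)` for its `m`-th Hasse derivative.
Expanding `d_{j-m,k-m}` as a sample mean, the `(cσ)^{2m}`-layer of the hermitian form factors as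
`Σ_{j,k} C(k,m) C(j,m) d_{j-m,k-m} v_k conj(v_j) = N⁻¹ Σ_t |P^[m](z_t)|²`, so
`Q_v(σ) = Σ_{m ≤ p} (-1)^m m! (cσ)^{2m} N⁻¹ Σ_t |P^[m](z_t)|²` is an even real polynomial.
Its top coefficient comes from `P^[p] = v_p`, and its constant term from `P^[0] = P`.
-/

open Polynomial

theorem eval_ofFn {R : Type*} [CommSemiring R] [DecidableEq R] {n : ℕ} (v : Fin n → R) (x : R) :
    (ofFn n v).eval x = ∑ k : Fin n, v k * x ^ (k : ℕ) := by
  simp [ofFn_eq_sum_monomial, eval_finsetSum]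

theorem eval_hasseDeriv_ofFn {R : Type*} [CommSemiring R] [DecidableEq R] {n : ℕ}
    (v : Fin n → R) (m : ℕ) (x : R) :
    (hasseDeriv m (ofFn n v)).eval x
      = ∑ k : Fin n, ((k : ℕ).choose m : R) * v k * x ^ ((k : ℕ) - m) := by
  simp [ofFn_eq_sum_monomial, hasseDeriv_monomial, eval_finsetSum]

theorem eval_hasseDeriv_ofFn_last {R : Type*} [CommSemiring R] [DecidableEq R] {p : ℕ}
    (v : Fin (p + 1) → R) (x : R) : (hasseDeriv p (ofFn (p + 1) v)).eval x = v (Fin.last p) := by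
  simp [eval_hasseDeriv_ofFn, Fin.sum_univ_castSucc, Nat.choose_eq_zero_of_lt]

theorem natDegree_sum_C_mul_X_pow_two_mul_le {R : Type*} [Semiring R] (b : ℕ → R) (n : ℕ) :
    (∑ m ∈ range (n + 1), C (b m) * X ^ (2 * m)).natDegree ≤ 2 * n := by
  refine natDegree_sum_le_of_forall_le _ _ fun m hm => (natDegree_C_mul_X_pow_le _ _).trans ?_
  rw [mem_range] at hm
  omega

theorem coeff_sum_C_mul_X_pow_two_mul {R : Type*} [Semiring R] (b : ℕ → R) {m n : ℕ}
    (hm : m ≤ n) :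
    (∑ i ∈ range (n + 1), C (b i) * X ^ (2 * i)).coeff (2 * m) = b m := by
  rw [finsetSum_coeff, sum_eq_single m]
  · simp
  · intro i _ hi
    rw [coeff_C_mul_X_pow, if_neg (by omega)]
  · simp [Nat.lt_succ_of_le hm]

noncomputable def meanSqHasseDeriv {N : ℕ} (z : Fin N → ℂ) (P : ℂ[X]) (m : ℕ) : ℝ :=
  (N : ℝ)⁻¹ * ∑ t, ‖(hasseDeriv m P).eval (z t)‖ ^ 2

noncomputable def pseudoMomentPoly (p : ℕ) {N : ℕ} (z : Fin N → ℂ) (c : ℝ)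
    (v : Fin (p + 1) → ℂ) : ℝ[X] :=
  ∑ m ∈ range (p + 1),
    C ((-1) ^ m * m.factorial * c ^ (2 * m) * meanSqHasseDeriv z (ofFn (p + 1) v) m) * X ^ (2 * m)

section

variable (p : ℕ) {N : ℕ} (z : Fin N → ℂ)

theorem pseudoMomentMatrix_apply_eq_sum_range (c σ : ℝ) (j k : Fin (p + 1)) :
    pseudoMomentMatrix p z c σ j k = ∑ m ∈ range (p + 1),
      ((-1) ^ m * m.factorial * ((c * σ : ℝ) : ℂ) ^ (2 * m))
        * ((k : ℕ).choose m * (j : ℕ).choose m * empConjMoment z (j - m) (k - m)) := by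
  have hmin : min (j : ℕ) k + 1 ≤ p + 1 := by omega
  rw [pseudoMomentMatrix, sum_subset (range_subset_range.2 hmin)]
  · exact sum_congr rfl fun m _ => by ring
  · intro m _ hm
    rw [mem_range, not_lt, Nat.succ_le_iff] at hm
    rcases min_lt_iff.1 hm with hj | hk
    · simp [Nat.choose_eq_zero_of_lt hj]
    · simp [Nat.choose_eq_zero_of_lt hk]

theorem sum_choose_mul_empConjMoment (v : Fin (p + 1) → ℂ) (m : ℕ) :
    ∑ j : Fin (p + 1), ∑ k : Fin (p + 1),
        (k : ℕ).choose m * (j : ℕ).choose m * empConjMoment z (j - m) (k - m) * v k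
          * starRingEnd ℂ (v j)
      = (meanSqHasseDeriv z (ofFn (p + 1) v) m : ℂ) := by
  simp only [meanSqHasseDeriv, eval_hasseDeriv_ofFn, empConjMoment]
  push_cast
  simp only [← Complex.mul_conj', map_sum, map_mul, map_pow, map_natCast, sum_mul, mul_sum]
  rw [sum_comm_cycle]
  exact sum_congr rfl fun _ _ => sum_congr rfl fun _ _ => sum_congr rfl fun _ _ => by ring

theorem hermitianForm_pseudoMomentMatrix_eq_eval (c σ : ℝ) (v : Fin (p + 1) → ℂ) :
    ∑ j, ∑ k, pseudoMomentMatrix p z c σ j k * v k * starRingEnd ℂ (v j)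
      = (((pseudoMomentPoly p z c v).eval σ : ℝ) : ℂ) := by
  simp only [pseudoMomentMatrix_apply_eq_sum_range, sum_mul]
  rw [sum_comm_cycle]
  simp only [pseudoMomentPoly, eval_finsetSum, eval_mul, eval_C, eval_pow, eval_X]
  push_cast
  refine sum_congr rfl fun m _ => ?_
  rw [← sum_choose_mul_empConjMoment]
  simp only [mul_sum, sum_mul]
  exact sum_congr rfl fun _ _ => sum_congr rfl fun _ _ => by ring

theorem meanSqHasseDeriv_ofFn_last (hN : 0 < N) (v : Fin (p + 1) → ℂ) :
    meanSqHasseDeriv z (ofFn (p + 1) v) p = ‖v (Fin.last p)‖ ^ 2 := by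
  simp only [meanSqHasseDeriv, eval_hasseDeriv_ofFn_last, sum_const, card_univ, Fintype.card_fin,
    nsmul_eq_mul]
  exact inv_mul_cancel_left₀ (Nat.cast_ne_zero.2 hN.ne') _

end

theorem hermitianForm_of_pseudoMomentMatrix_general
    (p : ℕ) (c : ℝ) {N : ℕ} (hN : 0 < N) (z : Fin N → ℂ)
    (v : Fin (p + 1) → ℂ) :
    (∃ Q : Polynomial ℝ, Q.natDegree ≤ 2 * p ∧
      (∀ σ : ℝ, (∑ j, ∑ k, pseudoMomentMatrix p z c σ j k * v k * (starRingEnd ℂ) (v j))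
          = ((Q.eval σ : ℝ) : ℂ)) ∧
      Q.coeff (2 * p) = (-1 : ℝ) ^ p * (p.factorial : ℝ) * c ^ (2 * p)
          * ‖v (Fin.last p)‖ ^ 2) ∧
    (∑ j, ∑ k, pseudoMomentMatrix p z c 0 j k * v k * (starRingEnd ℂ) (v j))
        = (((N : ℝ)⁻¹ * ∑ t, ‖∑ k : Fin (p + 1), v k * (z t) ^ (k : ℕ)‖ ^ 2 : ℝ) : ℂ) ∧
    0 ≤ (N : ℝ)⁻¹ * ∑ t, ‖∑ k : Fin (p + 1), v k * (z t) ^ (k : ℕ)‖ ^ 2 := by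
  refine ⟨⟨pseudoMomentPoly p z c v, natDegree_sum_C_mul_X_pow_two_mul_le _ p,
    (hermitianForm_pseudoMomentMatrix_eq_eval p z c · v), ?_⟩, ?_, by positivity⟩
  · rw [pseudoMomentPoly, coeff_sum_C_mul_X_pow_two_mul _ le_rfl,
      meanSqHasseDeriv_ofFn_last p z hN]
  · rw [hermitianForm_pseudoMomentMatrix_eq_eval, ← coeff_zero_eq_eval_zero, ← mul_zero 2,
      pseudoMomentPoly, coeff_sum_C_mul_X_pow_two_mul _ p.zero_le]
    simp [meanSqHasseDeriv, eval_ofFn]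

/-- for every `v ∈ ℂ^{p+1}`, the hermitian form
`Q_v(σ) = Σ_{j,k} D̃(σ)_{jk} v_k conj(v_j)` is a real polynomial in `σ` of degree at most
`2p`, with leading `σ^{2p}`-coefficient `(−1)^p p! c^{2p} |v_p|²`, and
`Q_v(0) = N⁻¹ Σ_t |Σ_k v_k z_t^k|² ≥ 0`. -/
theorem hermitianForm_of_pseudoMomentMatrix
    (p : ℕ) (hp : 1 ≤ p) (c : ℝ) (hc : 0 < c) {N : ℕ} (hN : 0 < N) (z : Fin N → ℂ)
    (v : Fin (p + 1) → ℂ) :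
    (∃ Q : Polynomial ℝ, Q.natDegree ≤ 2 * p ∧
      (∀ σ : ℝ, (∑ j, ∑ k, pseudoMomentMatrix p z c σ j k * v k * (starRingEnd ℂ) (v j))
          = ((Q.eval σ : ℝ) : ℂ)) ∧
      Q.coeff (2 * p) = (-1 : ℝ) ^ p * (p.factorial : ℝ) * c ^ (2 * p)
          * ‖v (Fin.last p)‖ ^ 2) ∧
    (∑ j, ∑ k, pseudoMomentMatrix p z c 0 j k * v k * (starRingEnd ℂ) (v j))
        = (((N : ℝ)⁻¹ * ∑ t, ‖∑ k : Fin (p + 1), v k * (z t) ^ (k : ℕ)‖ ^ 2 : ℝ) : ℂ) ∧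
    0 ≤ (N : ℝ)⁻¹ * ∑ t, ‖∑ k : Fin (p + 1), v k * (z t) ^ (k : ℕ)‖ ^ 2 :=
  hermitianForm_of_pseudoMomentMatrix_general p c hN z v
end

section
/- Let p ≥ 2, c > 0, and z_1,…,z_N ∈ ℂ taking at least p+1 distinct values. Set d_{j,k} = N^{-1} Σ_{t=1}^{N} z_t^k · conj(z_t)^j for 0 ≤ j,k ≤ p, and for σ ∈ ℝ let D̃(σ) be the (p+1)×(p+1) matrix with (j,k)-entry Σ_{m=0}^{min(j,k)} (−1)^m · C(k,m) · C(j,m) · m! · (cσ)^{2m} · d_{j−m,k−m}. Then the set {σ > 0 : det D̃(σ) = 0} is nonempty and closed and its infimum is positive and attained, i.e. there is a minimal σ̂ > 0 with det D̃(σ̂) = 0. -/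
/-!
`D̃(0)` is `N⁻¹ VᴴV` for the Vandermonde matrix `V = (z_t ^ k)` of the sample, which is injective
because the sample takes at least `p + 1` distinct values; so `D̃(0)` is positive definite. The
`(1,1)` entry `d₁₁ - (cσ)²` of `D̃(σ)` becomes negative for large `σ`. Along the continuous Hermitian
family `σ ↦ D̃(σ)`, positive definiteness is an open condition whose limits are positive
semidefinite, so by connectedness of `[0, b]`, where `D̃(b)` is not positive definite, the matrix
must become singular somewhere in `(0, b]`. As `det D̃(0) ≠ 0`, the positive zeros of `det D̃` are
its zeros in `[0, ∞)`, a closed set; hence their infimum is attained, and is positive.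
-/

open Finset

open Filter Topology Matrix
open scoped ComplexOrder

namespace Matrix

variable {𝕜 n X : Type*} [RCLike 𝕜] [Fintype n] [TopologicalSpace X]

theorem isClosed_setOf_posSemidef {A : X → Matrix n n 𝕜} (hA : Continuous A) :
    IsClosed {x | (A x).PosSemidef} := by
  simp_rw [posSemidef_iff_dotProduct_mulVec, Set.ofPred_and, Set.ofPred_forall]
  exact (isClosed_eq hA.matrix_conjTranspose hA).inter
    (isClosed_iInter fun v => isClosed_le continuous_const (by fun_prop))

theorem star_smul_dotProduct_mulVec_smul (M : Matrix n n 𝕜) (r : ℝ) (v : n → 𝕜) :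
    star (r • v) ⬝ᵥ M *ᵥ (r • v) = (r * r) • (star v ⬝ᵥ M *ᵥ v) := by
  simp [star_smul, mulVec_smul, smul_smul]

theorem isOpen_setOf_posDef {A : X → Matrix n n 𝕜} (hA : Continuous A)
    (hherm : ∀ x, (A x).IsHermitian) : IsOpen {x | (A x).PosDef} := by
  have hq : Continuous fun y : X × (n → 𝕜) => RCLike.re (star y.2 ⬝ᵥ A y.1 *ᵥ y.2) := by
    fun_prop
  refine isOpen_iff_mem_nhds.mpr fun x₀ h₀ => ?_
  have hsphere : ∀ᶠ x in 𝓝 x₀, ∀ u ∈ Metric.sphere (0 : n → 𝕜) 1,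
      0 < RCLike.re (star u ⬝ᵥ A x *ᵥ u) :=
    (isCompact_sphere 0 1).eventually_forall_of_forall_eventually fun u hu =>
      (isOpen_lt continuous_const hq).mem_nhds (RCLike.pos_iff.mp
        (h₀.dotProduct_mulVec_pos (ne_zero_of_mem_sphere one_ne_zero ⟨u, hu⟩))).1
  filter_upwards [hsphere] with x hx
  refine .of_dotProduct_mulVec_pos (hherm x) fun v hv => ?_
  have hv' : 0 < ‖v‖ := norm_pos_iff.mpr hv
  refine RCLike.pos_iff.mpr ⟨?_, (hherm x).im_star_dotProduct_mulVec_self v⟩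
  calc 0 < ‖v‖ * ‖v‖ * RCLike.re (star (‖v‖⁻¹ • v) ⬝ᵥ A x *ᵥ (‖v‖⁻¹ • v)) :=
        mul_pos (mul_pos hv' hv') (hx _ (by simp [norm_smul, hv'.ne']))
    _ = RCLike.re (star v ⬝ᵥ A x *ᵥ v) := by
        rw [← RCLike.smul_re, ← star_smul_dotProduct_mulVec_smul, smul_smul,
          mul_inv_cancel₀ hv'.ne', one_smul]

theorem exists_mem_Ioc_det_eq_zero_of_posDef_of_not_posDef [DecidableEq n]
    {A : ℝ → Matrix n n 𝕜} (hA : Continuous A) (hherm : ∀ σ, (A σ).IsHermitian) {a b : ℝ}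
    (hab : a ≤ b) (ha : (A a).PosDef) (hb : ¬(A b).PosDef) :
    ∃ σ ∈ Set.Ioc a b, (A σ).det = 0 := by
  by_contra! hdet
  have hclosure : closure {σ | (A σ).PosDef} ∩ Set.Icc a b ⊆ {σ | (A σ).PosDef} := by
    rintro σ ⟨hσ, hσa, hσb⟩
    obtain rfl | hlt := hσa.eq_or_lt
    · exact ha
    have hpsd : (A σ).PosSemidef :=
      closure_minimal (fun τ hτ => PosDef.posSemidef hτ) (isClosed_setOf_posSemidef hA) hσ
    exact hpsd.posDef_iff_det_ne_zero.mpr (hdet σ ⟨hlt, hσb⟩)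
  exact hb (isPreconnected_Icc.subset_of_closure_inter_subset (isOpen_setOf_posDef hA hherm)
    ⟨a, ⟨le_rfl, hab⟩, ha⟩ hclosure ⟨hab, le_rfl⟩)

theorem mulVec_rectVandermonde_injective {R ι : Type*} [CommRing R] [IsDomain R] [Fintype ι]
    [DecidableEq R] (v : ι → R) {k : ℕ} (hk : k ≤ #(univ.image v)) :
    Function.Injective (rectVandermonde v 1 k).mulVec := by
  obtain ⟨e⟩ : Nonempty (Fin k ↪ univ.image v) :=
    Function.Embedding.nonempty_of_card_le (by simpa using hk)
  refine injective_iff_map_eq_zero (mulVecLin (rectVandermonde v 1 k)) |>.mpr fun x hx => ?_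
  refine eq_zero_of_forall_index_sum_pow_mul_eq_zero (f := fun i => (e i : R))
    (Subtype.val_injective.comp e.injective) fun i => ?_
  obtain ⟨t, -, ht⟩ := mem_image.mp (e i).2
  simpa [ht, mulVec, dotProduct, rectVandermonde_apply] using congrFun hx t

end Matrix

theorem isClosed_setOf_pos_and_eq_zero {α M : Type*} [TopologicalSpace α] [LinearOrder α]
    [ClosedIciTopology α] [Zero α] [TopologicalSpace M] [T1Space M] [Zero M] {f : α → M}
    (hf : Continuous f) (h0 : f 0 ≠ 0) : IsClosed {x | 0 < x ∧ f x = 0} := by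
  have : {x | 0 < x ∧ f x = 0} = Set.Ici 0 ∩ f ⁻¹' {0} := Set.ext fun x =>
    ⟨fun h => ⟨h.1.le, h.2⟩, fun h => ⟨h.1.lt_of_ne (by rintro rfl; exact h0 h.2), h.2⟩⟩
  rw [this]
  exact isClosed_Ici.inter (isClosed_singleton.preimage hf)

section PseudoMomentMatrix

variable {N : ℕ} (z : Fin N → ℂ)

theorem conj_empConjMoment (j k : ℕ) :
    starRingEnd ℂ (empConjMoment z j k) = empConjMoment z k j := by
  simp only [empConjMoment, map_mul, map_inv₀, map_natCast, map_sum, map_pow,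
    Complex.conj_conj, mul_comm]

theorem empConjMoment_zero_zero (hN : 0 < N) : empConjMoment z 0 0 = 1 := by
  simp [empConjMoment, hN.ne']

theorem isHermitian_pseudoMomentMatrix (p : ℕ) (c σ : ℝ) :
    (pseudoMomentMatrix p z c σ).IsHermitian := by
  ext j k
  simp only [conjTranspose_apply, pseudoMomentMatrix, Complex.star_def, map_sum, map_mul,
    map_pow, map_neg, map_one, map_natCast, Complex.conj_ofReal, conj_empConjMoment,
    Nat.min_comm (k : ℕ)]
  exact sum_congr rfl fun m _ => by ring

theorem continuous_pseudoMomentMatrix (p : ℕ) (c : ℝ) :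
    Continuous fun σ => pseudoMomentMatrix p z c σ :=
  continuous_pi fun j => continuous_pi fun k => by unfold pseudoMomentMatrix; fun_prop

theorem pseudoMomentMatrix_zero (p : ℕ) (c : ℝ) :
    pseudoMomentMatrix p z c 0 =
      ((N : ℝ)⁻¹) • ((rectVandermonde z 1 (p + 1))ᴴ * rectVandermonde z 1 (p + 1)) := by
  ext j k
  rw [pseudoMomentMatrix, sum_eq_single 0 (fun m _ hm => by simp [hm]) (by simp)]
  simp [empConjMoment, mul_apply, rectVandermonde_apply, Finset.mul_sum, mul_comm]

theorem posDef_pseudoMomentMatrix_zero (p : ℕ) (c : ℝ) (hN : 0 < N)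
    (hdistinct : p + 1 ≤ (Finset.univ.image z).card) :
    (pseudoMomentMatrix p z c 0).PosDef := by
  rw [pseudoMomentMatrix_zero]
  exact (PosDef.conjTranspose_mul_self _ (mulVec_rectVandermonde_injective z hdistinct)).smul
    (by positivity)

theorem pseudoMomentMatrix_one_one {p : ℕ} (hp : 1 ≤ p) (hN : 0 < N) (c σ : ℝ) :
    pseudoMomentMatrix p z c σ ⟨1, by omega⟩ ⟨1, by omega⟩ =
      empConjMoment z 1 1 - ((c * σ) ^ 2 : ℝ) := by
  simp [pseudoMomentMatrix, sum_range_succ, empConjMoment_zero_zero z hN, sub_eq_add_neg,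
    mul_pow]

theorem exists_not_posDef_pseudoMomentMatrix {p : ℕ} (hp : 1 ≤ p) {c : ℝ} (hc : 0 < c)
    (hN : 0 < N) : ∃ σ > 0, ¬(pseudoMomentMatrix p z c σ).PosDef := by
  set a := (empConjMoment z 1 1).re
  refine ⟨(|a| + 1) / c, by positivity, fun hPD => ?_⟩
  have hdiag := (RCLike.pos_iff.mp (hPD.diag_pos (i := ⟨1, by omega⟩))).1
  rw [pseudoMomentMatrix_one_one z hp hN, mul_div_cancel₀ _ hc.ne'] at hdiag
  simp only [RCLike.re_to_complex, Complex.sub_re, Complex.ofReal_re] at hdiag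
  nlinarith [le_abs_self a, abs_nonneg a]

end PseudoMomentMatrix

/-- if the sample takes at least `p+1` distinct values, then the set
`{σ > 0 : det D̃(σ) = 0}` is nonempty and closed, and its infimum is positive and is
attained: there is a minimal `σ̂ > 0` with `det D̃(σ̂) = 0`. -/
theorem empirical_noise_estimate_exists
    (p : ℕ) (hp : 2 ≤ p) (c : ℝ) (hc : 0 < c) {N : ℕ} (hN : 0 < N) (z : Fin N → ℂ)
    (hdistinct : p + 1 ≤ (Finset.univ.image z).card) :
    {σ : ℝ | 0 < σ ∧ (pseudoMomentMatrix p z c σ).det = 0}.Nonempty ∧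
    IsClosed {σ : ℝ | 0 < σ ∧ (pseudoMomentMatrix p z c σ).det = 0} ∧
    0 < sInf {σ : ℝ | 0 < σ ∧ (pseudoMomentMatrix p z c σ).det = 0} ∧
    (pseudoMomentMatrix p z c
        (sInf {σ : ℝ | 0 < σ ∧ (pseudoMomentMatrix p z c σ).det = 0})).det = 0 := by
  have hcont := continuous_pseudoMomentMatrix z p c
  have hPD₀ := posDef_pseudoMomentMatrix_zero z p c hN hdistinct
  obtain ⟨b, hb, hbPD⟩ := exists_not_posDef_pseudoMomentMatrix z (by omega : 1 ≤ p) hc hN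
  obtain ⟨σ, hσ, hdet⟩ := exists_mem_Ioc_det_eq_zero_of_posDef_of_not_posDef hcont
    (isHermitian_pseudoMomentMatrix z p c) hb.le hPD₀ hbPD
  have hne : {σ : ℝ | 0 < σ ∧ (pseudoMomentMatrix p z c σ).det = 0}.Nonempty := ⟨σ, hσ.1, hdet⟩
  have hclosed := isClosed_setOf_pos_and_eq_zero hcont.matrix_det hPD₀.det_pos.ne'
  exact ⟨hne, hclosed, hclosed.csInf_mem hne ⟨0, fun _ h => h.1.le⟩⟩
end
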